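/- There exist universal constants C₀ > 0 (sufficiently small) and c > 0 such that the following holds. Let δ > 0, 0 < C < 1/2, and positive integers i, k, m satisfy 1 ≤ i ≤ k and k² ≤ C₀ C² m. Then β'_i := (δ/√m) · |Σ_{x=0}^m F'_{m,x}(0) · P_i((x − m/2)/(Cm))| ≤ c · max( (δ/C)·√(i/m), δ i^{3/2}/(C² m) ), where F'_{m,x}(0) = 4 · 2^{−m} binom(m,x) · (x − m/2). -/

import Mathlib

/-!
Expanding `P_i`, the sum becomes a combination of the central binomial moments
`M_p(m) = Σ_x binom(m,x) (x - m/2)^p`. Odd moments vanish by the symmetry `x ↦ m - x`, so only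
odd `i` contribute, and the `j`-th term then involves `M_{i-2j+1}`. Pascal's rule gives a recursion
for the moments from which `M_{2r}(m) ≤ 2^m (2r)!/r! (m/8)^r`: the moments are dominated by
those of a Gaussian of variance `m/4`. Together with `binom(2i-2j, i) ≤ (2i)^{i-2j}/(i-2j)!`,
`binom(i,j) ≤ 2^{i+1}/√(i+1)` and `i² ≤ C² m`, the `j`-th term is at most
`4 √i/C · 2^{-(i-2j-1)/2}`, and the geometric series sums to `|Σ| ≤ 8 √i/C`.
-/

open Finset

/-- The `i`-th Legendre polynomial (as a function), via its explicit expansion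
`P_i(x) = 2^{−i} Σ_{j=0}^{⌊i/2⌋} (−1)^j binom(i,j) binom(2i−2j, i) x^{i−2j}`. -/
noncomputable def legendre (i : ℕ) (x : ℝ) : ℝ :=
  ((2 : ℝ) ^ i)⁻¹ * ∑ j ∈ Finset.range (i / 2 + 1),
    (-1 : ℝ) ^ j * (i.choose j : ℝ) * ((2 * i - 2 * j).choose i : ℝ) * x ^ (i - 2 * j)

open Nat Real

theorem Finset.sum_range_two_mul_add_one_of_odd_eq_zero {M : Type*} [AddCommMonoid M]
    (g : ℕ → M) (hg : ∀ s, Odd s → g s = 0) (r : ℕ) :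
    ∑ s ∈ range (2 * r + 1), g s = ∑ t ∈ range (r + 1), g (2 * t) := by
  induction r with
  | zero => simp
  | succ r ih =>
    rw [show 2 * (r + 1) + 1 = 2 * r + 1 + 1 + 1 by ring, sum_range_succ, sum_range_succ, ih,
      hg _ (odd_two_mul_add_one r), add_zero, sum_range_succ _ (r + 1)]
    rfl

theorem add_pow_two_mul_add_sub_pow_two_mul {R : Type*} [CommRing R] (y h : R) (r : ℕ) :
    (y + h) ^ (2 * r) + (y - h) ^ (2 * r) =
      2 * ∑ t ∈ range (r + 1),
        ((2 * r).choose (2 * t) : R) * y ^ (2 * t) * h ^ (2 * (r - t)) := by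
  rw [sub_eq_add_neg, add_pow, add_pow, ← sum_add_distrib, mul_sum,
    sum_range_two_mul_add_one_of_odd_eq_zero]
  · refine sum_congr rfl fun t _ => ?_
    rw [show 2 * r - 2 * t = 2 * (r - t) by omega, (even_two_mul _).neg_pow]
    ring
  · intro s hs
    rcases le_or_gt s (2 * r) with hsr | hsr
    · have hodd : Odd (2 * r - s) := by
        obtain ⟨a, rfl⟩ := hs
        exact ⟨r - a - 1, by omega⟩
      rw [hodd.neg_pow]
      ring
    · simp [choose_eq_zero_of_lt hsr]

theorem Nat.two_mul_add_one_mul_centralBinom_sq_le (n : ℕ) :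
    (2 * n + 1) * centralBinom n ^ 2 ≤ 16 ^ n := by
  induction n with
  | zero => simp
  | succ n ih =>
    have hstep : ((n + 1) * centralBinom (n + 1)) ^ 2 =
        (2 * (2 * n + 1) * centralBinom n) ^ 2 := by
      rw [succ_mul_centralBinom_succ]
    refine Nat.le_of_mul_le_mul_left ?_ (by positivity : 0 < (n + 1) ^ 2)
    calc (n + 1) ^ 2 * ((2 * (n + 1) + 1) * centralBinom (n + 1) ^ 2)
        = 4 * (2 * n + 1) * (2 * n + 3) * ((2 * n + 1) * centralBinom n ^ 2) := by
          linear_combination (2 * n + 3) * hstep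
      _ ≤ 16 * (n + 1) ^ 2 * 16 ^ n := Nat.mul_le_mul (by nlinarith) ih
      _ = (n + 1) ^ 2 * 16 ^ (n + 1) := by ring

theorem Nat.centralBinom_le_four_pow_div_sqrt (n : ℕ) :
    (centralBinom n : ℝ) ≤ 4 ^ n / √(2 * n + 1) := by
  rw [le_div_iff₀ (by positivity)]
  refine le_of_pow_le_pow_left₀ two_ne_zero (by positivity) ?_
  rw [mul_pow, sq_sqrt (by positivity), ← pow_mul, show (4 : ℝ) ^ (n * 2) = 16 ^ n by
    rw [pow_mul']; norm_num]
  exact_mod_cast (mul_comm _ _).trans_le (two_mul_add_one_mul_centralBinom_sq_le n)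

theorem Nat.choose_le_two_pow_succ_div_sqrt (n j : ℕ) :
    (n.choose j : ℝ) ≤ 2 ^ (n + 1) / √(n + 1) := by
  obtain ⟨l, rfl | rfl⟩ := n.even_or_odd'
  · calc ((2 * l).choose j : ℝ) ≤ centralBinom l := by
          exact_mod_cast choose_le_centralBinom j l
      _ ≤ 4 ^ l / √(2 * l + 1) := centralBinom_le_four_pow_div_sqrt l
      _ ≤ 2 ^ (2 * l + 1) / √(↑(2 * l) + 1) := by
          push_cast
          gcongr
          rw [pow_succ, pow_mul]
          norm_num
  · calc ((2 * l + 1).choose j : ℝ) ≤ (2 * (l + 1)).choose (j + 1) := by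
          exact_mod_cast (choose_succ_succ' (2 * l + 1) j).symm ▸ Nat.le_add_right _ _
      _ ≤ centralBinom (l + 1) := by exact_mod_cast choose_le_centralBinom _ _
      _ ≤ 4 ^ (l + 1) / √(2 * ↑(l + 1) + 1) := centralBinom_le_four_pow_div_sqrt _
      _ ≤ 2 ^ (2 * l + 1 + 1) / √(↑(2 * l + 1) + 1) := by
          push_cast
          gcongr
          · rw [show 2 * l + 1 + 1 = 2 * (l + 1) by ring, pow_mul]
            norm_num
          · linarith

noncomputable def binomialCentralMoment (m p : ℕ) : ℝ :=
  ∑ x ∈ range (m + 1), (m.choose x : ℝ) * ((x : ℝ) - (m : ℝ) / 2) ^ p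

theorem binomialCentralMoment_of_odd (m : ℕ) {p : ℕ} (hp : Odd p) :
    binomialCentralMoment m p = 0 := by
  have hreflect : binomialCentralMoment m p = -binomialCentralMoment m p := by
    conv_lhs => rw [binomialCentralMoment, ← sum_range_reflect]
    rw [binomialCentralMoment, ← sum_neg_distrib]
    refine sum_congr rfl fun x hx => ?_
    have hxm : x ≤ m := Nat.lt_succ_iff.mp (mem_range.mp hx)
    rw [add_tsub_cancel_right, choose_symm hxm, Nat.cast_sub hxm,
      show (m : ℝ) - x - m / 2 = -(x - m / 2) by ring, hp.neg_pow, mul_neg]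
  linarith

theorem binomialCentralMoment_two_mul_nonneg (m r : ℕ) :
    0 ≤ binomialCentralMoment m (2 * r) :=
  sum_nonneg fun x _ => by rw [pow_mul]; positivity

theorem binomialCentralMoment_succ (m p : ℕ) :
    binomialCentralMoment (m + 1) p = ∑ x ∈ range (m + 1), (m.choose x : ℝ) *
      (((x : ℝ) - m / 2 + 1 / 2) ^ p + ((x : ℝ) - m / 2 - 1 / 2) ^ p) := by
  rw [binomialCentralMoment, sum_choose_succ_mul (fun x _ => ((x : ℝ) - ↑(m + 1) / 2) ^ p) m,
    ← sum_add_distrib]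
  refine sum_congr rfl fun x _ => ?_
  push_cast
  ring

theorem binomialCentralMoment_succ_two_mul (m r : ℕ) :
    binomialCentralMoment (m + 1) (2 * r) = 2 * ∑ t ∈ range (r + 1),
      ((2 * r).choose (2 * t) : ℝ) * (1 / 2) ^ (2 * (r - t)) *
        binomialCentralMoment m (2 * t) := by
  rw [binomialCentralMoment_succ]
  simp only [add_pow_two_mul_add_sub_pow_two_mul, binomialCentralMoment, mul_sum]
  rw [sum_comm]
  refine sum_congr rfl fun t _ => sum_congr rfl fun x _ => ?_
  ring

theorem choose_two_mul_mul_factorial_le {r t : ℕ} (ht : t ≤ r) :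
    ((2 * r).choose (2 * t) : ℝ) * (1 / 2) ^ (2 * (r - t)) * ((2 * t)! / t !) ≤
      (2 * r)! / r ! * r.choose t * (1 / 8) ^ (r - t) := by
  obtain ⟨s, rfl⟩ := Nat.exists_eq_add_of_le ht
  have hkey : ((1 : ℝ) / 2) ^ (2 * s) / (2 * s)! ≤ (1 / 8) ^ s / s ! := by
    rw [div_le_div_iff₀ (by positivity) (by positivity), pow_mul,
      show ((1 : ℝ) / 2) ^ 2 = 1 / 8 * 2 by norm_num, mul_pow, mul_assoc]
    gcongr
    exact_mod_cast two_pow_mul_factorial_le_factorial_two_mul s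
  rw [cast_choose ℝ (by omega : 2 * t ≤ 2 * (t + s)), cast_choose ℝ (by omega : t ≤ t + s),
    show 2 * (t + s) - 2 * t = 2 * s by omega, show t + s - t = s by omega]
  calc ((2 * (t + s))! / ((2 * t)! * (2 * s)!) : ℝ) * (1 / 2) ^ (2 * s) * ((2 * t)! / t !)
      = (2 * (t + s))! / t ! * ((1 / 2) ^ (2 * s) / (2 * s)!) := by
        field_simp
    _ ≤ (2 * (t + s))! / t ! * ((1 / 8) ^ s / s !) := by gcongr
    _ = (2 * (t + s))! / (t + s)! * ((t + s)! / (t ! * s !)) * (1 / 8) ^ s := by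
        field_simp

theorem binomialCentralMoment_two_mul_le (m r : ℕ) :
    binomialCentralMoment m (2 * r) ≤ 2 ^ m * ((2 * r)! / r !) * (m / 8) ^ r := by
  induction m generalizing r with
  | zero => rcases r with _ | r <;> simp [binomialCentralMoment]
  | succ m ih =>
    calc binomialCentralMoment (m + 1) (2 * r)
        ≤ 2 * ∑ t ∈ range (r + 1), ((2 * r).choose (2 * t) : ℝ) * (1 / 2) ^ (2 * (r - t)) *
            (2 ^ m * ((2 * t)! / t !) * (m / 8) ^ t) := by
          rw [binomialCentralMoment_succ_two_mul]
          gcongr with t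
          exact ih t
      _ ≤ 2 * ∑ t ∈ range (r + 1), 2 ^ m * (m / 8 : ℝ) ^ t *
            ((2 * r)! / r ! * r.choose t * (1 / 8) ^ (r - t)) := by
          gcongr 2 * ∑ t ∈ _, ?_ with t ht
          calc _ = 2 ^ m * (m / 8 : ℝ) ^ t *
                (((2 * r).choose (2 * t) : ℝ) * (1 / 2) ^ (2 * (r - t)) * ((2 * t)! / t !)) := by
                ring
            _ ≤ _ := mul_le_mul_of_nonneg_left
              (choose_two_mul_mul_factorial_le (Nat.lt_succ_iff.mp (mem_range.mp ht)))
              (by positivity)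
      _ = 2 ^ (m + 1) * ((2 * r)! / r !) * (↑(m + 1) / 8) ^ r := by
          rw [show ((↑(m + 1) : ℝ) / 8) = m / 8 + 1 / 8 by push_cast; ring, add_pow, mul_sum,
            mul_sum]
          refine sum_congr rfl fun t _ => ?_
          ring

theorem choose_mul_binomialCentralMoment_le (m n u : ℕ) :
    n.choose (2 * u + 1) * binomialCentralMoment m (2 * (u + 1)) ≤
      2 ^ (m + 1) * n ^ (2 * u + 1) * (m / 8) ^ (u + 1) := by
  have hfact : ((2 * (u + 1))! / (u + 1)! : ℝ) ≤ 2 * (2 * u + 1)! := by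
    rw [div_le_iff₀ (by positivity)]
    have : (2 * (u + 1))! ≤ 2 * (2 * u + 1)! * (u + 1)! := by
      rw [show 2 * (u + 1) = 2 * u + 1 + 1 by ring, factorial_succ,
        show 2 * u + 1 + 1 = 2 * (u + 1) by ring, mul_right_comm]
      exact Nat.mul_le_mul_left _ (self_le_factorial _)
    exact_mod_cast this
  calc n.choose (2 * u + 1) * binomialCentralMoment m (2 * (u + 1))
      ≤ n ^ (2 * u + 1) / (2 * u + 1)! *
          (2 ^ m * ((2 * (u + 1))! / (u + 1)!) * (m / 8) ^ (u + 1)) :=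
        mul_le_mul (choose_le_pow_div _ _) (binomialCentralMoment_two_mul_le m (u + 1))
          (binomialCentralMoment_two_mul_nonneg _ _) (by positivity)
    _ ≤ n ^ (2 * u + 1) / (2 * u + 1)! * (2 ^ m * (2 * (2 * u + 1)!) * (m / 8) ^ (u + 1)) := by
        gcongr
    _ = 2 ^ (m + 1) * n ^ (2 * u + 1) * (m / 8) ^ (u + 1) := by
        field_simp
        ring

theorem choose_mul_binomialCentralMoment_div_le {C : ℝ} (hC : 0 < C) {m n i : ℕ} (u : ℕ)
    (hm : 0 < m) (hn : n ≤ 2 * i) (hi : (i : ℝ) ^ 2 ≤ C ^ 2 * m) :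
    4 * ((2 : ℝ) ^ m)⁻¹ * ((C * m) ^ (2 * u + 1))⁻¹ *
        (n.choose (2 * u + 1) * binomialCentralMoment m (2 * (u + 1))) ≤
      2 * (i / C) * (1 / 2) ^ u := by
  have hm' : (0 : ℝ) < m := by exact_mod_cast hm
  calc 4 * ((2 : ℝ) ^ m)⁻¹ * ((C * m) ^ (2 * u + 1))⁻¹ *
        (n.choose (2 * u + 1) * binomialCentralMoment m (2 * (u + 1)))
      ≤ 4 * ((2 : ℝ) ^ m)⁻¹ * ((C * m) ^ (2 * u + 1))⁻¹ *
        (2 ^ (m + 1) * (2 * i) ^ (2 * u + 1) * (m / 8) ^ (u + 1)) := by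
        refine mul_le_mul_of_nonneg_left ((choose_mul_binomialCentralMoment_le m n u).trans ?_)
          (by positivity)
        gcongr
        exact_mod_cast hn
    _ = 2 * (i / C) * (((2 * i) ^ 2) ^ u * (m / 8) ^ u / ((C * m) ^ 2) ^ u) := by
        simp only [pow_succ _ (2 * u), pow_succ _ u, pow_mul]
        field_simp
        ring
    _ ≤ 2 * (i / C) * (1 / 2) ^ u := by
        rw [← mul_pow, ← div_pow]
        refine mul_le_mul_of_nonneg_left (pow_le_pow_left₀ (by positivity) ?_ u) (by positivity)
        rw [div_le_iff₀ (by positivity)]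
        nlinarith

theorem sum_mul_legendre_eq (m i : ℕ) (a : ℝ) :
    ∑ x ∈ range (m + 1),
        (4 * ((2 : ℝ) ^ m)⁻¹ * (m.choose x : ℝ) * ((x : ℝ) - (m : ℝ) / 2)) *
          legendre i (((x : ℝ) - (m : ℝ) / 2) / a) =
      ∑ j ∈ range (i / 2 + 1), ((2 : ℝ) ^ i)⁻¹ * (-1) ^ j * i.choose j *
        (4 * ((2 : ℝ) ^ m)⁻¹ * (a ^ (i - 2 * j))⁻¹ *
          ((2 * i - 2 * j).choose i * binomialCentralMoment m (i - 2 * j + 1))) := by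
  simp only [legendre, binomialCentralMoment, mul_sum]
  rw [sum_comm]
  refine sum_congr rfl fun j _ => sum_congr rfl fun x _ => ?_
  rw [div_pow, pow_succ]
  ring

theorem abs_legendre_term_le {C : ℝ} (hC : 0 < C) {m i j u : ℕ} (hm : 0 < m)
    (hi : (i : ℝ) ^ 2 ≤ C ^ 2 * m) (hiju : i = 2 * j + 2 * u + 1) :
    |((2 : ℝ) ^ i)⁻¹ * (-1) ^ j * i.choose j *
        (4 * ((2 : ℝ) ^ m)⁻¹ * ((C * m) ^ (i - 2 * j))⁻¹ *
          ((2 * i - 2 * j).choose i * binomialCentralMoment m (i - 2 * j + 1)))| ≤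
      4 * √i / C * (1 / 2) ^ u := by
  rw [show i - 2 * j = 2 * u + 1 by omega, show 2 * u + 1 + 1 = 2 * (u + 1) by ring,
    choose_symm_of_eq_add (show 2 * i - 2 * j = i + (2 * u + 1) by omega)]
  set Q := 4 * ((2 : ℝ) ^ m)⁻¹ * ((C * m) ^ (2 * u + 1))⁻¹ *
    ((2 * i - 2 * j).choose (2 * u + 1) * binomialCentralMoment m (2 * (u + 1)))
  have hQ₀ : 0 ≤ Q :=
    mul_nonneg (by positivity)
      (mul_nonneg (by positivity) (binomialCentralMoment_two_mul_nonneg _ _))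
  have hQ : Q ≤ 2 * (i / C) * (1 / 2) ^ u :=
    choose_mul_binomialCentralMoment_div_le hC u hm (by omega) hi
  have hP : ((2 : ℝ) ^ i)⁻¹ * i.choose j ≤ 2 / √(i + 1) := by
    calc ((2 : ℝ) ^ i)⁻¹ * i.choose j
        ≤ ((2 : ℝ) ^ i)⁻¹ * (2 ^ (i + 1) / √(i + 1)) := by
          gcongr
          exact choose_le_two_pow_succ_div_sqrt i j
      _ = 2 / √(i + 1) := by
          field_simp
          ring
  have hsqrt : (i : ℝ) / √(i + 1) ≤ √i := by
    rw [div_le_iff₀ (by positivity)]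
    calc (i : ℝ) = √i * √i := (mul_self_sqrt (by positivity)).symm
      _ ≤ √i * √(i + 1) := by gcongr; linarith
  rw [show ((2 : ℝ) ^ i)⁻¹ * (-1) ^ j * i.choose j * Q =
      (-1) ^ j * ((2 ^ i)⁻¹ * i.choose j * Q) by ring,
    abs_mul, abs_pow, abs_neg, abs_one, one_pow, one_mul,
    abs_of_nonneg (mul_nonneg (by positivity) hQ₀)]
  calc ((2 : ℝ) ^ i)⁻¹ * i.choose j * Q ≤ 2 / √(i + 1) * (2 * (i / C) * (1 / 2) ^ u) :=
        mul_le_mul hP hQ (by positivity) (by positivity)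
    _ = 4 * (i / √(i + 1)) / C * (1 / 2) ^ u := by ring
    _ ≤ 4 * √i / C * (1 / 2) ^ u := by gcongr

theorem abs_sum_mul_legendre_le {C : ℝ} (hC : 0 < C) {m i : ℕ} (hm : 0 < m)
    (hi : (i : ℝ) ^ 2 ≤ C ^ 2 * m) :
    |∑ x ∈ range (m + 1),
        (4 * ((2 : ℝ) ^ m)⁻¹ * (m.choose x : ℝ) * ((x : ℝ) - (m : ℝ) / 2)) *
          legendre i (((x : ℝ) - (m : ℝ) / 2) / (C * m))| ≤ 8 * √i / C := by
  rw [sum_mul_legendre_eq]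
  obtain ⟨l, rfl | rfl⟩ := i.even_or_odd'
  · rw [sum_eq_zero fun j hj => ?_, abs_zero]
    · positivity
    · have hj : j ≤ l := by have := mem_range.mp hj; omega
      rw [binomialCentralMoment_of_odd m ⟨l - j, by omega⟩]
      ring
  · rw [show (2 * l + 1) / 2 = l by omega]
    calc _ ≤ ∑ j ∈ range (l + 1), 4 * √↑(2 * l + 1) / C * (1 / 2) ^ (l - j) :=
          (abs_sum_le_sum_abs _ _).trans <| sum_le_sum fun j hj =>
            abs_legendre_term_le hC hm hi (by have := mem_range.mp hj; omega)
      _ = 4 * √↑(2 * l + 1) / C * ∑ u ∈ range (l + 1), (1 / 2) ^ u := by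
          rw [mul_sum, ← sum_range_reflect]
          refine sum_congr rfl fun j hj => ?_
          rw [show l - (l + 1 - 1 - j) = j by have := mem_range.mp hj; omega]
      _ ≤ 4 * √↑(2 * l + 1) / C * 2 := by gcongr; exact sum_geometric_two_le _
      _ = 8 * √↑(2 * l + 1) / C := by ring

/-- Bound on the first-order term `β'_i` in the binomial moment-matching analysis,
where `F'_{m,x}(0) = 4 · 2^{−m} binom(m,x) (x − m/2)`. -/
theorem binomial_first_order_bound :
    ∃ C₀ c : ℝ, 0 < C₀ ∧ 0 < c ∧
    ∀ (δ C : ℝ) (i k m : ℕ),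
      0 < δ → 0 < C → C < 1 / 2 → 1 ≤ i → i ≤ k → 0 < m →
      (k : ℝ) ^ 2 ≤ C₀ * C ^ 2 * m →
      (δ / Real.sqrt m) *
        |∑ x ∈ Finset.range (m + 1),
          (4 * ((2 : ℝ) ^ m)⁻¹ * (m.choose x : ℝ) * ((x : ℝ) - (m : ℝ) / 2)) *
            legendre i (((x : ℝ) - (m : ℝ) / 2) / (C * m))| ≤
      c * max ((δ / C) * Real.sqrt ((i : ℝ) / m))
        (δ * (i : ℝ) ^ ((3 : ℝ) / 2) / (C ^ 2 * m)) := by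
  refine ⟨1, 8, one_pos, by norm_num, fun δ C i k m hδ hC _ _ hik hm hk => ?_⟩
  have hi : (i : ℝ) ^ 2 ≤ C ^ 2 * m := by
    have : (i : ℝ) ≤ k := by exact_mod_cast hik
    nlinarith [(Nat.cast_nonneg i : (0 : ℝ) ≤ i)]
  calc δ / √m * |_| ≤ δ / √m * (8 * √i / C) := by
        gcongr
        exact abs_sum_mul_legendre_le hC hm hi
    _ = 8 * (δ / C * √(i / m)) := by rw [sqrt_div' _ (Nat.cast_nonneg _)]; ring
    _ ≤ 8 * max (δ / C * √(i / m)) (δ * i ^ ((3 : ℝ) / 2) / (C ^ 2 * m)) := by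
        gcongr; exact le_max_left _ _
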